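/- arXiv:2105.05634 — 5 statements merged into one kernel-verified Lean document; each statement's English description precedes it below -/
import Mathlib

section
/- Let M ∈ GL(2, ℂ) and let C be the FSCc matrix of a cycle whose point set in ℂ is nonempty. If a point z lies on the cycle C and γz + δ ≠ 0 (where M = [[α,β],[γ,δ]]), then the image point (αz+β)/(γz+δ) lies on the cycle with FSCc matrix conj(M)·C·M⁻¹. -/
open Matrix Complex

noncomputable def fscc (k l n m : ℝ) : Matrix (Fin 2) (Fin 2) ℂ :=
  !![(starRingEnd ℂ) (l + n * I), -(m : ℂ); (k : ℂ), -(l + n * I)]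

noncomputable def mconj (A : Matrix (Fin 2) (Fin 2) ℂ) : Matrix (Fin 2) (Fin 2) ℂ :=
  A.map (starRingEnd ℂ)

def onCycle (C : Matrix (Fin 2) (Fin 2) ℂ) (z : ℂ) : Prop :=
  Matrix.vecMul ![(-1 : ℂ), (starRingEnd ℂ) z] C ⬝ᵥ ![z, 1] = 0

/-!
In homogeneous coordinates the Möbius map `w = (αz+β)/(γz+δ)` is `M ·(z, 1)ᵀ = (γz+δ)·(w, 1)ᵀ`,
and dually `(-1, w)·M = (det M/(γz+δ))·(-1, z)`. Conjugating the second identity and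
substituting both into the quadratic form of `conj(M)·C·M⁻¹` at `w` shows that this form is a
scalar multiple of the quadratic form of `C` at `z`, so it vanishes whenever the latter does.
-/

section FractionalLinear

variable {K : Type*} [Field K] (M : Matrix (Fin 2) (Fin 2) K) {z : K}

theorem mulVec_vec_one_eq_smul (hd : M 1 0 * z + M 1 1 ≠ 0) :
    M *ᵥ ![z, 1] =
      (M 1 0 * z + M 1 1) • ![(M 0 0 * z + M 0 1) / (M 1 0 * z + M 1 1), 1] := by
  ext i
  fin_cases i <;> simp [mulVec_eq_sum, Fin.sum_univ_two, mul_div_cancel₀ _ hd, mul_comm z]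

theorem inv_mulVec_vec_one_eq_smul (hM : IsUnit M.det) (hd : M 1 0 * z + M 1 1 ≠ 0) :
    M⁻¹ *ᵥ ![(M 0 0 * z + M 0 1) / (M 1 0 * z + M 1 1), 1] =
      (M 1 0 * z + M 1 1)⁻¹ • ![z, 1] := by
  rw [← inv_smul_smul₀ hd ![(M 0 0 * z + M 0 1) / (M 1 0 * z + M 1 1), (1 : K)],
    ← mulVec_vec_one_eq_smul M hd, mulVec_smul, mulVec_mulVec, nonsing_inv_mul M hM,
    one_mulVec]

theorem vecMul_neg_one_eq_smul (hd : M 1 0 * z + M 1 1 ≠ 0) :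
    ![-1, (M 0 0 * z + M 0 1) / (M 1 0 * z + M 1 1)] ᵥ* M =
      (M.det / (M 1 0 * z + M 1 1)) • ![-1, z] := by
  have hd' : z * M 1 0 + M 1 1 ≠ 0 := by rwa [mul_comm]
  ext i
  fin_cases i <;>
    simp only [vecMul_eq_sum, Finset.sum_apply, Pi.smul_apply, smul_eq_mul, Fin.sum_univ_two,
      Fin.zero_eta, Fin.mk_one, cons_val_zero, cons_val_one, cons_val_fin_one, det_fin_two] <;>
    field_simp <;> ring

end FractionalLinear

theorem vecMul_mconj_eq_smul (M : Matrix (Fin 2) (Fin 2) ℂ) {z : ℂ}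
    (hd : M 1 0 * z + M 1 1 ≠ 0) :
    ![-1, starRingEnd ℂ ((M 0 0 * z + M 0 1) / (M 1 0 * z + M 1 1))] ᵥ* mconj M =
      starRingEnd ℂ (M.det / (M 1 0 * z + M 1 1)) • ![-1, starRingEnd ℂ z] := by
  ext i
  have h := congrArg (starRingEnd ℂ) (congrFun (vecMul_neg_one_eq_smul M hd) i)
  rw [RingHom.map_vecMul] at h
  fin_cases i <;> simpa [mconj, vecMul_eq_sum, Fin.sum_univ_two] using h

theorem dotProduct_vecMul_mconj_mul_mul_inv (M C : Matrix (Fin 2) (Fin 2) ℂ) {z : ℂ}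
    (hM : IsUnit M.det) (hd : M 1 0 * z + M 1 1 ≠ 0) :
    ![-1, starRingEnd ℂ ((M 0 0 * z + M 0 1) / (M 1 0 * z + M 1 1))] ᵥ* (mconj M * C * M⁻¹) ⬝ᵥ
        ![(M 0 0 * z + M 0 1) / (M 1 0 * z + M 1 1), 1] =
      starRingEnd ℂ (M.det / (M 1 0 * z + M 1 1)) *
        ((M 1 0 * z + M 1 1)⁻¹ * (![-1, starRingEnd ℂ z] ᵥ* C ⬝ᵥ ![z, 1])) := by
  rw [← vecMul_vecMul, ← vecMul_vecMul, ← dotProduct_mulVec, vecMul_mconj_eq_smul M hd,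
    inv_mulVec_vec_one_eq_smul M hM hd, smul_vecMul, smul_dotProduct, dotProduct_smul,
    smul_eq_mul, smul_eq_mul]

theorem onCycle_mconj_mul_mul_inv {M C : Matrix (Fin 2) (Fin 2) ℂ} {z : ℂ}
    (hM : IsUnit M.det) (hd : M 1 0 * z + M 1 1 ≠ 0) (hz : onCycle C z) :
    onCycle (mconj M * C * M⁻¹) ((M 0 0 * z + M 0 1) / (M 1 0 * z + M 1 1)) := by
  rw [onCycle, dotProduct_vecMul_mconj_mul_mul_inv M C hM hd, hz, mul_zero, mul_zero]

theorem flt_maps_cycle_to_cycle (M : Matrix (Fin 2) (Fin 2) ℂ) (hM : IsUnit M.det)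
    (k l n m : ℝ) (z : ℂ)
    (hz : onCycle (fscc k l n m) z)
    (hd : M 1 0 * z + M 1 1 ≠ 0) :
    onCycle (mconj M * fscc k l n m * M⁻¹)
      ((M 0 0 * z + M 0 1) / (M 1 0 * z + M 1 1)) :=
  onCycle_mconj_mul_mul_inv hM hd hz
end

section
/- The cycles product ⟨C, C₁⟩ = -tr(C·conj(C₁)) is invariant under the simultaneous transformation C ↦ conj(M)·C·M⁻¹, C₁ ↦ conj(M)·C₁·M⁻¹ for any invertible 2×2 complex matrix M. -/
open Matrix Complex

/-- Cycles product `⟨C, C₁⟩ = -tr(C·conj(C₁))`. -/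
noncomputable def cprod (A B : Matrix (Fin 2) (Fin 2) ℂ) : ℂ :=
  -(A * mconj B).trace

lemma mconj_mul (A B : Matrix (Fin 2) (Fin 2) ℂ) :
    mconj (A * B) = mconj A * mconj B := by
  ext i j
  simp [mconj, Matrix.mul_apply, map_sum]

lemma mconj_det (A : Matrix (Fin 2) (Fin 2) ℂ) :
    (mconj A).det = starRingEnd ℂ A.det := by
  simp [mconj, ← RingHom.mapMatrix_apply, ← RingHom.map_det]

lemma mconj_mconj (A : Matrix (Fin 2) (Fin 2) ℂ) : mconj (mconj A) = A := by
  ext i j; simp [mconj]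

lemma mconj_inv (A : Matrix (Fin 2) (Fin 2) ℂ) :
    mconj A⁻¹ = (mconj A)⁻¹ := by
  have hadj := (starRingEnd ℂ).map_adjugate A
  have hdet := mconj_det A
  simp only [RingHom.mapMatrix_apply] at hadj
  ext i j
  simp [Matrix.inv_def, mconj, Ring.inverse_eq_inv', Matrix.map_apply, Matrix.smul_apply,
    map_inv₀, ← hadj, hdet, mconj] at *

theorem cprod_flt_invariant (M C C₁ : Matrix (Fin 2) (Fin 2) ℂ) (hM : IsUnit M.det) :
    cprod (mconj M * C * M⁻¹) (mconj M * C₁ * M⁻¹) = cprod C C₁ := by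
  have hM' : IsUnit (mconj M).det := by
    rw [mconj_det]; exact hM.map (starRingEnd ℂ)
  unfold cprod
  rw [mconj_mul, mconj_mul, mconj_inv, mconj_mconj]
  congr 1
  rw [Matrix.trace_mul_comm]
  simp only [Matrix.mul_assoc]
  rw [← Matrix.mul_assoc (mconj M)⁻¹ (mconj M), Matrix.nonsing_inv_mul _ hM',
    Matrix.one_mul, Matrix.trace_mul_comm]
  simp only [Matrix.mul_assoc]
  rw [Matrix.nonsing_inv_mul _ hM, Matrix.mul_one, Matrix.trace_mul_comm]
end

section
/- For four pairwise distinct points z₁, z₂, z₃, z₄ ∈ ℂ, the cycles cross ratio of the corresponding zero radius cycles equals the squared modulus of the classical cross ratio: ⟦Z₁,Z₂;Z₃,Z₄⟧ = |(z₁,z₂;z₃,z₄)|², where (z₁,z₂;z₃,z₄) = ((z₁-z₃)/(z₁-z₄)) / ((z₂-z₃)/(z₂-z₄)). -/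
open Complex

/-- Cycles product of cycles with parameters `(k,l,n,m)` and `(k₁,l₁,n₁,m₁)`. -/
def cprodR (k l n m k₁ l₁ n₁ m₁ : ℝ) : ℝ :=
  k * m₁ + k₁ * m - 2 * l * l₁ - 2 * n * n₁

/-- Cycles product of the zero radius cycles at two points of `ℂ`. -/
noncomputable def zprod (z w : ℂ) : ℝ :=
  cprodR 1 z.re z.im (‖z‖ ^ 2) 1 w.re w.im (‖w‖ ^ 2)

lemma zprod_eq_norm_sub_sq (z w : ℂ) : zprod z w = ‖z - w‖ ^ 2 := by
  simp only [zprod, cprodR, ← Complex.normSq_eq_norm_sq, Complex.normSq_apply,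
    Complex.sub_re, Complex.sub_im]
  ring

theorem cycles_cross_ratio_of_points_general (z₁ z₂ z₃ z₄ : ℂ) :
    (zprod z₁ z₃ * zprod z₂ z₄) / (zprod z₁ z₄ * zprod z₂ z₃) =
      ‖((z₁ - z₃) / (z₁ - z₄)) / ((z₂ - z₃) / (z₂ - z₄))‖ ^ 2 := by
  rw [div_div_div_eq, norm_div, norm_mul, norm_mul]
  simp only [zprod_eq_norm_sub_sq, div_pow, mul_pow]

theorem cycles_cross_ratio_of_points (z₁ z₂ z₃ z₄ : ℂ)
    (h12 : z₁ ≠ z₂) (h13 : z₁ ≠ z₃) (h14 : z₁ ≠ z₄)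
    (h23 : z₂ ≠ z₃) (h24 : z₂ ≠ z₄) (h34 : z₃ ≠ z₄) :
    (zprod z₁ z₃ * zprod z₂ z₄) / (zprod z₁ z₄ * zprod z₂ z₃) =
      ‖((z₁ - z₃) / (z₁ - z₄)) / ((z₂ - z₃) / (z₂ - z₄))‖ ^ 2 :=
  cycles_cross_ratio_of_points_general z₁ z₂ z₃ z₄
end

section
/- The cycles cross ratio is FLT-invariant: for any M ∈ GL(2,ℂ) and cycles C₁, C₂, C₃, C₄ with ⟨C₁,C₄⟩·⟨C₂,C₃⟩ ≠ 0, we have ⟦conj(M)C₁M⁻¹, conj(M)C₂M⁻¹; conj(M)C₃M⁻¹, conj(M)C₄M⁻¹⟧ = ⟦C₁,C₂;C₃,C₄⟧. -/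
open Matrix Complex

/-- Cycles cross ratio of four cycles. -/
noncomputable def ccr (C₁ C₂ C₃ C₄ : Matrix (Fin 2) (Fin 2) ℂ) : ℂ :=
  (cprod C₁ C₃ * cprod C₂ C₄) / (cprod C₁ C₄ * cprod C₂ C₃)

lemma cprod_flt (M : Matrix (Fin 2) (Fin 2) ℂ) (hM : IsUnit M.det)
    (A B : Matrix (Fin 2) (Fin 2) ℂ) :
    cprod (mconj M * A * M⁻¹) (mconj M * B * M⁻¹) = cprod A B := by
  have h1 : M⁻¹ * M = 1 := nonsing_inv_mul M hM
  have hmul : ∀ X Y : Matrix (Fin 2) (Fin 2) ℂ, mconj (X * Y) = mconj X * mconj Y := by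
    intro X Y; simp [mconj, Matrix.map_mul]
  have hconj : mconj (mconj M) = M := by
    simp [mconj, Matrix.map_map]
    ext i j; simp
  unfold cprod
  rw [hmul, hmul, hconj]
  congr 1
  rw [show mconj M * A * M⁻¹ * (M * mconj B * mconj M⁻¹)
      = mconj M * (A * (M⁻¹ * M) * mconj B) * mconj M⁻¹ by noncomm_ring,
    h1, Matrix.mul_one, Matrix.trace_mul_cycle, ← hmul, h1]
  simp [mconj, Matrix.mul_assoc]

theorem ccr_flt_invariant (M : Matrix (Fin 2) (Fin 2) ℂ) (hM : IsUnit M.det)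
    (k₁ l₁ n₁ m₁ k₂ l₂ n₂ m₂ k₃ l₃ n₃ m₃ k₄ l₄ n₄ m₄ : ℝ)
    (C₁ : Matrix (Fin 2) (Fin 2) ℂ) (hC₁ : C₁ = fscc k₁ l₁ n₁ m₁)
    (C₂ : Matrix (Fin 2) (Fin 2) ℂ) (hC₂ : C₂ = fscc k₂ l₂ n₂ m₂)
    (C₃ : Matrix (Fin 2) (Fin 2) ℂ) (hC₃ : C₃ = fscc k₃ l₃ n₃ m₃)
    (C₄ : Matrix (Fin 2) (Fin 2) ℂ) (hC₄ : C₄ = fscc k₄ l₄ n₄ m₄)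
    (hdef : cprod C₁ C₄ * cprod C₂ C₃ ≠ 0) :
    ccr (mconj M * C₁ * M⁻¹) (mconj M * C₂ * M⁻¹)
        (mconj M * C₃ * M⁻¹) (mconj M * C₄ * M⁻¹) = ccr C₁ C₂ C₃ C₄ := by
  unfold ccr
  rw [cprod_flt M hM, cprod_flt M hM, cprod_flt M hM, cprod_flt M hM]
end

section
/- Two circles with parameters (1, l, n, m) and (1, l₁, n₁, m₁), with centres c = l+in, c₁ = l₁+in₁ and positive squared radii r² = l²+n²-m, r₁² = l₁²+n₁²-m₁, intersect in exactly one point (are tangent) if and only if ⟨C,C₁⟩² = ⟨C,C⟩·⟨C₁,C₁⟩, i.e. (m+m₁-2ll₁-2nn₁)² = 4(l²+n²-m)(l₁²+n₁²-m₁). -/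
/-!
A similarity `w ↦ c + (c₁ - c) w` moves the centres to `0` and `1`. Subtracting the two circle
equations `|w|² = P`, `|w - 1|² = P₁` fixes `Re w = (1 + P - P₁) / 2`, and then `(Im w)² = P - (Re w)²`
has exactly one solution iff its right side vanishes, which rearranges to
`(1 - P - P₁)² = 4 P P₁`; undoing the scaling by `|c₁ - c|²` gives the cycle-product identity.
-/

open Complex

theorem existsUnique_re_eq_and_im_sq_eq_iff (a Y : ℝ) :
    (∃! w : ℂ, w.re = a ∧ w.im ^ 2 = Y) ↔ Y = 0 := by
  constructor
  · rintro ⟨w, ⟨-, hw⟩, huniq⟩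
    have hY : 0 ≤ Y := hw ▸ sq_nonneg _
    have hplus : (⟨a, √Y⟩ : ℂ) = w := huniq _ ⟨rfl, Real.sq_sqrt hY⟩
    have hminus : (⟨a, -√Y⟩ : ℂ) = w := huniq _ ⟨rfl, by rw [neg_sq, Real.sq_sqrt hY]⟩
    have : √Y = -√Y := congrArg im (hplus.trans hminus.symm)
    exact (Real.sqrt_eq_zero hY).mp (by linarith)
  · rintro rfl
    refine ⟨⟨a, 0⟩, ⟨rfl, zero_pow two_ne_zero⟩, fun w ⟨hre, him⟩ => ?_⟩
    exact Complex.ext hre (pow_eq_zero_iff two_ne_zero |>.mp him)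

theorem existsUnique_normSq_eq_and_normSq_sub_one_eq_iff (P P₁ : ℝ) :
    (∃! w : ℂ, normSq w = P ∧ normSq (w - 1) = P₁) ↔ (1 - P - P₁) ^ 2 = 4 * P * P₁ := by
  have hcoord : ∀ w : ℂ, (normSq w = P ∧ normSq (w - 1) = P₁) ↔
      (w.re = (1 + P - P₁) / 2 ∧ w.im ^ 2 = P - ((1 + P - P₁) / 2) ^ 2) := by
    intro w
    simp only [normSq_apply, sub_re, sub_im, one_re, one_im]
    constructor
    · rintro ⟨h, h₁⟩
      have hre : w.re = (1 + P - P₁) / 2 := by linarith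
      exact ⟨hre, by rw [← hre]; linarith⟩
    · rintro ⟨hre, him⟩
      rw [hre]
      constructor <;> linear_combination him
  rw [existsUnique_congr hcoord, existsUnique_re_eq_and_im_sq_eq_iff]
  constructor
  · intro h; linear_combination (-4) * h
  · intro h; linear_combination (-1 / 4) * h

theorem existsUnique_normSq_sub_eq_and_normSq_sub_eq_iff {c c₁ : ℂ} (hc : c ≠ c₁) (R R₁ : ℝ) :
    (∃! z : ℂ, normSq (z - c) = R ∧ normSq (z - c₁) = R₁) ↔
      (normSq (c₁ - c) - R - R₁) ^ 2 = 4 * R * R₁ := by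
  have hu : c₁ - c ≠ 0 := sub_ne_zero.mpr hc.symm
  have hD : normSq (c₁ - c) ≠ 0 := normSq_eq_zero.not.mpr hu
  let e : ℂ ≃ ℂ := (Equiv.mulLeft₀ (c₁ - c) hu).trans (Equiv.addLeft c)
  have hscale : ∀ w : ℂ, (normSq (e w - c) = R ∧ normSq (e w - c₁) = R₁) ↔
      (normSq w = R / normSq (c₁ - c) ∧ normSq (w - 1) = R₁ / normSq (c₁ - c)) := by
    intro w
    have he : e w = c + (c₁ - c) * w := rfl
    have h₀ : e w - c = (c₁ - c) * w := by rw [he]; ring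
    have h₁ : e w - c₁ = (c₁ - c) * (w - 1) := by rw [he]; ring
    rw [h₀, h₁, normSq_mul, normSq_mul, eq_div_iff hD, eq_div_iff hD, mul_comm (normSq w),
      mul_comm (normSq (w - 1))]
  rw [← e.existsUnique_congr_right, existsUnique_congr hscale,
    existsUnique_normSq_eq_and_normSq_sub_one_eq_iff]
  field_simp

theorem norm_eq_sqrt_iff_normSq_eq {R : ℝ} (hR : 0 ≤ R) (w : ℂ) : ‖w‖ = √R ↔ normSq w = R := by
  rw [eq_comm, Real.sqrt_eq_iff_eq_sq hR (norm_nonneg w), ← normSq_eq_norm_sq, eq_comm]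

theorem tangency_criterion (l n m l₁ n₁ m₁ : ℝ)
    (hr : 0 < l ^ 2 + n ^ 2 - m) (hr₁ : 0 < l₁ ^ 2 + n₁ ^ 2 - m₁)
    (hc : (l + n * I : ℂ) ≠ (l₁ + n₁ * I : ℂ)) :
    (∃! z : ℂ, ‖z - (l + n * I)‖ = Real.sqrt (l ^ 2 + n ^ 2 - m) ∧
        ‖z - (l₁ + n₁ * I)‖ = Real.sqrt (l₁ ^ 2 + n₁ ^ 2 - m₁)) ↔
      (m + m₁ - 2 * l * l₁ - 2 * n * n₁) ^ 2 =
        4 * (l ^ 2 + n ^ 2 - m) * (l₁ ^ 2 + n₁ ^ 2 - m₁) := by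
  simp only [norm_eq_sqrt_iff_normSq_eq hr.le, norm_eq_sqrt_iff_normSq_eq hr₁.le]
  rw [existsUnique_normSq_sub_eq_and_normSq_sub_eq_iff hc]
  have hgap : normSq ((l₁ + n₁ * I) - (l + n * I)) - (l ^ 2 + n ^ 2 - m) - (l₁ ^ 2 + n₁ ^ 2 - m₁)
      = m + m₁ - 2 * l * l₁ - 2 * n * n₁ := by
    simp only [normSq_apply, sub_re, sub_im, add_re, add_im, mul_re, mul_im, ofReal_re, ofReal_im,
      I_re, I_im]
    ring
  rw [hgap]
end
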